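/- Let DG = (V, E) and DG' = (V', E') be two dynamic graphs with node features X and X'. Let l be a labeling of node pairs satisfying, for all (u, v) ∈ V² and (u', v') ∈ (V')², l((u, v)) = l((u', v')) if and only if [X_u || X_v] = [X'_{u'} || X'_{v'}]. Run the 2-DWL test on both graphs initialized with l (with an injective hash), and run the same Global HopeDGN (same f_1, f_2, AGG, UPDATE, and node features X, X') on both graphs. Then for every time t, every iteration j ≥ 0, and all node pairs (u, v) ∈ V², (u', v') ∈ (V')²: if the 2-DWL colors satisfy c^{(j)}_t((u, v)) = c^{(j)}_t((u', v')), then the Global HopeDGN embeddings satisfy h^{(j)}_t((u, v)) = h^{(j)}_t((u', v')). In particular, the expressive power of the Global HopeDGN is upper bounded by the 2-DWL test. -/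
import Mathlib


/-- Historical interaction sequence `A^{<t}_{u,v}`: the sorted list of all
timestamps `t' < t` with `(u,v,t') ∈ E` or `(v,u,t') ∈ E`. -/
noncomputable def hist {V : Type} [DecidableEq V] (E : Multiset (V × V × ℝ)) (t : ℝ)
    (u v : V) : List ℝ :=
  ((E.filter fun e => ((e.1 = u ∧ e.2.1 = v) ∨ (e.1 = v ∧ e.2.1 = u)) ∧ e.2.2 < t).map
    fun e => e.2.2).sort (· ≤ ·)

/-- Time-interval sequence `B^t_{u,v}`: obtained from `A^{<t}_{u,v}` by replacing
each timestamp `a` by `t - a`. -/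
noncomputable def Bseq {V : Type} [DecidableEq V] (E : Multiset (V × V × ℝ)) (t : ℝ)
    (u v : V) : List ℝ :=
  (hist E t u v).map fun a => t - a

/-- 2-DWL colors on node pairs at time `t`: `c⁰ = l` and
`c^{j+1}(v₁,v₂) = HASH (c^j(v₁,v₂), {{ (c^j(w,v₂), c^j(v₁,w), A^{<t}_{w,v₁}, A^{<t}_{w,v₂}) : w ∈ V }})`. -/
noncomputable def dwl2 {V : Type} [Fintype V] [DecidableEq V] {C : Type}
    (E : Multiset (V × V × ℝ)) (t : ℝ) (l : V × V → C)
    (hash : C × Multiset (C × C × List ℝ × List ℝ) → C) : ℕ → V × V → C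
  | 0 => l
  | j + 1 => fun s =>
      hash (dwl2 E t l hash j s,
        (Finset.univ : Finset V).val.map fun w =>
          (dwl2 E t l hash j (w, s.2), dwl2 E t l hash j (s.1, w),
           hist E t w s.1, hist E t w s.2))

/-- Global HopeDGN node-pair embeddings at time `t`:
`h⁰(u,v) = [X_u ‖ X_v]` and
`h^{l+1}(s) = UPDATE (h^l(s), AGG {{ ψ(s,w) : w ∈ V }})` with
`ψ((u,v),w) = [f₁([h^l(u,w) ‖ h^l(v,w)]) ‖ f₂([B^t_{u,w} ‖ B^t_{v,w}])]`. -/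
noncomputable def hope {V : Type} [Fintype V] [DecidableEq V] {dN d1 d2 dA : ℕ}
    (E : Multiset (V × V × ℝ)) (t : ℝ) (X : V → Fin dN → ℝ)
    (f1 : (Fin (dN + dN) → ℝ) × (Fin (dN + dN) → ℝ) → Fin d1 → ℝ)
    (f2 : List ℝ × List ℝ → Fin d2 → ℝ)
    (AGG : Multiset ((Fin d1 → ℝ) × (Fin d2 → ℝ)) → Fin dA → ℝ)
    (UPDATE : (Fin (dN + dN) → ℝ) × (Fin dA → ℝ) → Fin (dN + dN) → ℝ) :
    ℕ → V × V → Fin (dN + dN) → ℝ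
  | 0 => fun s => Fin.append (X s.1) (X s.2)
  | j + 1 => fun s =>
      UPDATE (hope E t X f1 f2 AGG UPDATE j s,
        AGG ((Finset.univ : Finset V).val.map fun w =>
          (f1 (hope E t X f1 f2 AGG UPDATE j (s.1, w),
               hope E t X f1 f2 AGG UPDATE j (s.2, w)),
           f2 (Bseq E t s.1 w, Bseq E t s.2 w))))


private lemma hist_comm {V : Type} [DecidableEq V] (E : Multiset (V × V × ℝ)) (t : ℝ)
    (u v : V) : hist E t u v = hist E t v u := by
  unfold hist
  congr 2
  apply Multiset.filter_congr
  intro e _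
  tauto

private lemma map_eq_of_map_eq {α β γ δ : Type*} [Nonempty δ] (s : Multiset α) (t : Multiset β)
    (f : α → γ) (g : β → γ) (F : α → δ) (G : β → δ)
    (h : s.map f = t.map g)
    (hcross : ∀ x ∈ s, ∀ y ∈ t, f x = g y → F x = G y) :
    s.map F = t.map G := by
  classical
  set θ : γ → δ := fun c => if hc : ∃ y ∈ t, g y = c then G hc.choose else Classical.arbitrary δ
    with hθ
  have hθt : ∀ y ∈ t, θ (g y) = G y := by
    intro y hy
    have hc : ∃ y' ∈ t, g y' = g y := ⟨y, hy, rfl⟩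
    rw [hθ]
    simp only [dif_pos hc]
    obtain ⟨hy', hgy'⟩ := hc.choose_spec
    have hx : ∃ x ∈ s, f x = g y := by
      have : g y ∈ t.map g := Multiset.mem_map_of_mem g hy
      rw [← h] at this
      simpa using this
    obtain ⟨x, hxs, hfx⟩ := hx
    rw [← hcross x hxs hc.choose hy' (hfx.trans hgy'.symm), hcross x hxs y hy hfx]
  have hθs : ∀ x ∈ s, θ (f x) = F x := by
    intro x hx
    have hmem : f x ∈ t.map g := by rw [← h]; exact Multiset.mem_map_of_mem f hx
    obtain ⟨y, hy, hgy⟩ := Multiset.mem_map.mp hmem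
    rw [← hgy, hθt y hy, hcross x hx y hy hgy.symm]
  calc s.map F = s.map (θ ∘ f) := Multiset.map_congr rfl (fun x hx => (hθs x hx).symm)
    _ = (s.map f).map θ := (Multiset.map_map θ f s).symm
    _ = (t.map g).map θ := by rw [h]
    _ = t.map (θ ∘ g) := Multiset.map_map θ g t
    _ = t.map G := Multiset.map_congr rfl (fun y hy => hθt y hy)

private lemma append_inj {m n : ℕ} {a a' : Fin m → ℝ} {b b' : Fin n → ℝ}
    (h : Fin.append a b = Fin.append a' b') : a = a' ∧ b = b' := by
  constructor
  · funext i
    have := congrFun h (Fin.castAdd n i)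
    simpa [Fin.append_left] using this
  · funext i
    have := congrFun h (Fin.natAdd m i)
    simpa [Fin.append_right] using this


/-- Proposition 4: the expressive power of the Global HopeDGN is
upper bounded by the 2-DWL test. Given two dynamic graphs with node features
`X`, `X'` and node-pair labelings `l`, `l'` with
`l (u,v) = l' (u',v') ↔ [X_u ‖ X_v] = [X'_{u'} ‖ X'_{v'}]`, run the 2-DWL test with
an injective hash and the same Global HopeDGN on both graphs; then equal 2-DWL
colors at time `t` and iteration `j` imply equal HopeDGN embeddings. -/
theorem hope_bounded_by_dwl2 {V V' : Type} [Fintype V] [DecidableEq V]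
    [Fintype V'] [DecidableEq V'] {C : Type} {dN d1 d2 dA : ℕ}
    (E : Multiset (V × V × ℝ)) (E' : Multiset (V' × V' × ℝ))
    (X : V → Fin dN → ℝ) (X' : V' → Fin dN → ℝ)
    (l : V × V → C) (l' : V' × V' → C)
    (hl : ∀ (p : V × V) (q : V' × V'),
      l p = l' q ↔ Fin.append (X p.1) (X p.2) = Fin.append (X' q.1) (X' q.2))
    (hash : C × Multiset (C × C × List ℝ × List ℝ) → C)
    (hash_inj : Function.Injective hash)
    (f1 : (Fin (dN + dN) → ℝ) × (Fin (dN + dN) → ℝ) → Fin d1 → ℝ)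
    (f2 : List ℝ × List ℝ → Fin d2 → ℝ)
    (AGG : Multiset ((Fin d1 → ℝ) × (Fin d2 → ℝ)) → Fin dA → ℝ)
    (UPDATE : (Fin (dN + dN) → ℝ) × (Fin dA → ℝ) → Fin (dN + dN) → ℝ) :
    ∀ (t : ℝ) (j : ℕ) (p : V × V) (q : V' × V'),
      dwl2 E t l hash j p = dwl2 E' t l' hash j q →
      hope E t X f1 f2 AGG UPDATE j p = hope E' t X' f1 f2 AGG UPDATE j q := by
  
  intro t
  have key : ∀ (j : ℕ) (p : V × V) (q : V' × V'),
      dwl2 E t l hash j p = dwl2 E' t l' hash j q →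
      hope E t X f1 f2 AGG UPDATE j p = hope E' t X' f1 f2 AGG UPDATE j q ∧
      hope E t X f1 f2 AGG UPDATE j (p.2, p.1) = hope E' t X' f1 f2 AGG UPDATE j (q.2, q.1) := by
    intro j
    induction j with
    | zero =>
      intro p q h
      simp only [dwl2] at h
      have happ := (hl p q).mp h
      obtain ⟨h1, h2⟩ := append_inj happ
      constructor
      · simpa [hope] using happ
      · simp [hope, h1, h2]
    | succ j ih =>
      intro p q h
      simp only [dwl2] at h
      have h' := hash_inj h
      have h1 : dwl2 E t l hash j p = dwl2 E' t l' hash j q := congrArg Prod.fst h'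
      have h2 := congrArg Prod.snd h'
      simp only at h2
      have hB : ∀ (w : V) (w' : V'),
          (dwl2 E t l hash j (w, p.2), dwl2 E t l hash j (p.1, w),
            hist E t w p.1, hist E t w p.2) =
          (dwl2 E' t l' hash j (w', q.2), dwl2 E' t l' hash j (q.1, w'),
            hist E' t w' q.1, hist E' t w' q.2) →
          hope E t X f1 f2 AGG UPDATE j (p.1, w) = hope E' t X' f1 f2 AGG UPDATE j (q.1, w') ∧
          hope E t X f1 f2 AGG UPDATE j (p.2, w) = hope E' t X' f1 f2 AGG UPDATE j (q.2, w') ∧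
          Bseq E t p.1 w = Bseq E' t q.1 w' ∧ Bseq E t p.2 w = Bseq E' t q.2 w' := by
        intro w w' hw
        have e1 : dwl2 E t l hash j (w, p.2) = dwl2 E' t l' hash j (w', q.2) :=
          congrArg (fun z => z.1) hw
        have e2 : dwl2 E t l hash j (p.1, w) = dwl2 E' t l' hash j (q.1, w') :=
          congrArg (fun z => z.2.1) hw
        have e3 : hist E t w p.1 = hist E' t w' q.1 := congrArg (fun z => z.2.2.1) hw
        have e4 : hist E t w p.2 = hist E' t w' q.2 := congrArg (fun z => z.2.2.2) hw
        refine ⟨(ih _ _ e2).1, (ih _ _ e1).2, ?_, ?_⟩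
        · unfold Bseq; rw [hist_comm E t p.1 w, hist_comm E' t q.1 w', e3]
        · unfold Bseq; rw [hist_comm E t p.2 w, hist_comm E' t q.2 w', e4]
      constructor
      · simp only [hope]
        refine congrArg UPDATE (Prod.ext ?_ ?_)
        · exact (ih p q h1).1
        show AGG _ = AGG _
        refine congrArg AGG ?_
        refine map_eq_of_map_eq _ _ _ _ _ _ h2 ?_
        intro w _ w' _ hw
        obtain ⟨e1, e2, e3, e4⟩ := hB w w' hw
        rw [e1, e2, e3, e4]
      · simp only [hope]
        refine congrArg UPDATE (Prod.ext ?_ ?_)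
        · exact (ih p q h1).2
        show AGG _ = AGG _
        refine congrArg AGG ?_
        refine map_eq_of_map_eq _ _ _ _ _ _ h2 ?_
        intro w _ w' _ hw
        obtain ⟨e1, e2, e3, e4⟩ := hB w w' hw
        rw [e1, e2, e3, e4]
  intro j p q h
  exact (key j p q h).1
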